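/- arXiv:2507.16195 — 5 statements merged into one kernel-verified Lean document; each statement's English description precedes it below -/
import Mathlib

section
/- For matrices A, B in SL(2, ℝ) with x = tr(A), y = tr(B), z = tr(AB): tr([A,B]) = -2 if and only if x² + y² + z² = x y z. -/
theorem trace_commutator_eq_neg_two_iff (A B : Matrix.SpecialLinearGroup (Fin 2) ℝ) :
    Matrix.trace ((A * B * A⁻¹ * B⁻¹ : Matrix.SpecialLinearGroup (Fin 2) ℝ) :
        Matrix (Fin 2) (Fin 2) ℝ) = -2 ↔
      (Matrix.trace (A : Matrix (Fin 2) (Fin 2) ℝ)) ^ 2 +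
      (Matrix.trace (B : Matrix (Fin 2) (Fin 2) ℝ)) ^ 2 +
      (Matrix.trace ((A * B : Matrix.SpecialLinearGroup (Fin 2) ℝ) :
          Matrix (Fin 2) (Fin 2) ℝ)) ^ 2 =
      Matrix.trace (A : Matrix (Fin 2) (Fin 2) ℝ) *
        Matrix.trace (B : Matrix (Fin 2) (Fin 2) ℝ) *
        Matrix.trace ((A * B : Matrix.SpecialLinearGroup (Fin 2) ℝ) :
          Matrix (Fin 2) (Fin 2) ℝ) := by
  have hA : Matrix.det (A : Matrix (Fin 2) (Fin 2) ℝ) = 1 := A.2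
  have hB : Matrix.det (B : Matrix (Fin 2) (Fin 2) ℝ) = 1 := B.2
  rw [Matrix.det_fin_two] at hA hB
  simp only [Matrix.SpecialLinearGroup.coe_mul, Matrix.SpecialLinearGroup.coe_inv,
    Matrix.adjugate_fin_two, Matrix.trace_fin_two, Matrix.mul_apply, Fin.sum_univ_two,
    Matrix.of_apply, Matrix.cons_val', Matrix.cons_val_zero, Matrix.cons_val_one,
    Matrix.head_cons, Matrix.head_fin_const, Matrix.empty_val', Matrix.cons_val_fin_one]
  constructor <;> intro h <;> nlinarith [h, hA, hB, sq_nonneg (A 0 0), mul_self_nonneg (B 0 0)]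
end

section
/- Let x > 2 be a real number and let y > 1 satisfy y + 1/y = x. Then every Galois conjugate of x (other than x itself) has absolute value less than 2 and is real if and only if every Galois conjugate of y other than y and 1/y lies on the unit circle and 1/y is a conjugate of y. More precisely: x is a geometric Salem number if and only if y is a Salem number. -/
/-!
Each conjugate `z` of `y` gives the conjugate `z + z⁻¹` of `x = y + y⁻¹`, and every conjugate of
`x` arises this way (extend the embeddings `ℚ(x) → ℂ` to `ℚ(y)`). For real `w` with `|w| < 2` the
roots of `Z² - wZ + 1` lie on the unit circle; conversely `|z| = 1` gives `z + z⁻¹ = 2 Re z`, and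
`|2 Re z| = 2` would make `x = ±2` rational. Finally `y⁻¹` must be a conjugate of `y`: otherwise all other conjugates lie on
the unit circle, so `|N(y)| = y` is rational and `y⁻¹ = x - y` a rational algebraic integer in
`(0, 1)`.
-/

open Polynomial

/-- A real algebraic integer `x` is a geometric Salem number if `x > 2` and all its
Galois conjugates other than `x` itself are real with absolute value less than `2`. -/
def IsGeometricSalem (x : ℝ) : Prop :=
  IsIntegral ℤ x ∧ 2 < x ∧
    ∀ z : ℂ, aeval z (minpoly ℚ x) = 0 → z ≠ (x : ℂ) →
      z.im = 0 ∧ ‖z‖ < 2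

/-- A Salem number is a real algebraic integer `y > 1` all of whose Galois conjugates
other than `y` have absolute value at most `1`, `1/y` is a conjugate, and all conjugates
other than `y` and `1/y` lie on the unit circle. -/
def IsSalem (y : ℝ) : Prop :=
  IsIntegral ℤ y ∧ 1 < y ∧
    (∀ z : ℂ, aeval z (minpoly ℚ y) = 0 → z ≠ (y : ℂ) → ‖z‖ ≤ 1) ∧
    aeval ((y : ℂ))⁻¹ (minpoly ℚ y) = 0 ∧
    ∀ z : ℂ, aeval z (minpoly ℚ y) = 0 → z ≠ (y : ℂ) → z ≠ ((y : ℂ))⁻¹ →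
      ‖z‖ = 1

open IntermediateField

section Conjugates

variable {F E L : Type*} [Field F] [Field E] [Field L] [Algebra F E] [Algebra F L] {a : E}

theorem ne_zero_of_aeval_minpoly_eq_zero (ha : IsIntegral F a) (ha0 : a ≠ 0) {z : L}
    (hz : aeval z (minpoly F a) = 0) : z ≠ 0 := by
  rintro rfl
  rw [← coeff_zero_eq_aeval_zero'] at hz
  exact minpoly.coeff_zero_ne_zero ha ha0
    ((algebraMap F L).injective (hz.trans (map_zero _).symm))

theorem aeval_algHom_minpoly_coe {K : IntermediateField F E} (φ : K →ₐ[F] L) (t : K) :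
    aeval (φ t) (minpoly F (t : E)) = 0 := by
  rw [aeval_algHom_apply, ← minpoly_eq, minpoly.aeval, map_zero]

variable [IsAlgClosed L]

theorem exists_algHom_adjoin_apply_eq (ha : IsIntegral F a) {b : E} (hb : b ∈ F⟮a⟯) {w : L}
    (hw : aeval w (minpoly F b) = 0) : ∃ φ : F⟮a⟯ →ₐ[F] L, φ ⟨b, hb⟩ = w :=
  exists_algHom_adjoin_of_splits_of_aeval
    (fun _ hs => Set.mem_singleton_iff.mp hs ▸ ⟨ha, IsAlgClosed.splits _⟩) hb hw

theorem eq_algebraMap_of_aeval_algebraMap_minpoly (ha : IsIntegral F a) {r : F}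
    (hr : aeval (algebraMap F L r) (minpoly F a) = 0) : a = algebraMap F E r := by
  obtain ⟨φ, hφ⟩ := exists_algHom_adjoin_apply_eq ha (mem_adjoin_simple_self F a) hr
  rw [← φ.commutes r] at hφ
  exact congrArg Subtype.val (φ.injective hφ)

theorem aeval_add_inv_minpoly_add_inv (ha : IsIntegral F a) {z : L}
    (hz : aeval z (minpoly F a) = 0) : aeval (z + z⁻¹) (minpoly F (a + a⁻¹)) = 0 := by
  obtain ⟨φ, rfl⟩ := exists_algHom_adjoin_apply_eq ha (mem_adjoin_simple_self F a) hz
  rw [← map_inv₀, ← map_add]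
  exact aeval_algHom_minpoly_coe φ _

theorem exists_aeval_minpoly_eq_zero_add_inv_eq (ha : IsIntegral F a) {w : L}
    (hw : aeval w (minpoly F (a + a⁻¹)) = 0) :
    ∃ z, aeval z (minpoly F a) = 0 ∧ z + z⁻¹ = w := by
  have hmem : a ∈ F⟮a⟯ := mem_adjoin_simple_self F a
  obtain ⟨φ, rfl⟩ := exists_algHom_adjoin_apply_eq ha (add_mem hmem (inv_mem hmem)) hw
  exact ⟨φ ⟨a, hmem⟩, aeval_algHom_minpoly_coe φ _, by rw [← map_inv₀, ← map_add]; rfl⟩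

end Conjugates

theorem isIntegral_of_aeval_minpoly_eq_zero {R K E L : Type*} [CommRing R] [IsDomain R]
    [IsIntegrallyClosed R] [Field K] [Algebra R K] [IsFractionRing R K]
    [CommRing E] [IsDomain E] [Algebra R E] [Algebra K E] [IsScalarTower R K E]
    [CommRing L] [Algebra R L] [Algebra K L] [IsScalarTower R K L] {a : E} (ha : IsIntegral R a)
    {z : L} (hz : aeval z (minpoly K a) = 0) : IsIntegral R z := by
  rw [minpoly.isIntegrallyClosed_eq_field_fractions' K ha, aeval_map_algebraMap] at hz
  exact ⟨minpoly R a, minpoly.monic ha, hz⟩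

theorem IsIntegral.of_mul_eq_one_of_add {R A : Type*} [CommRing R] [CommRing A] [Algebra R A]
    {y y' : A} (hyy' : y * y' = 1) (hint : IsIntegral R (y + y')) : IsIntegral R y := by
  let s : integralClosure R A := ⟨y + y', hint⟩
  refine isIntegral_trans (A := integralClosure R A) y ⟨X ^ 2 - C s * X + 1, ?_, ?_⟩
  · monicity!
  · rw [← aeval_def]
    simp only [map_add, aeval_sub, map_pow, aeval_X, map_mul, aeval_C,
      Subalgebra.algebraMap_apply, map_one, s]
    linear_combination -hyy'

theorem eq_or_eq_inv_of_add_inv_eq_add_inv {K : Type*} [Field K] {z c : K} (hz : z ≠ 0)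
    (hc : c ≠ 0) (h : z + z⁻¹ = c + c⁻¹) : z = c ∨ z = c⁻¹ := by
  have : (z - c) * (z - c⁻¹) = 0 := by
    field_simp at h ⊢
    linear_combination h
  simpa [sub_eq_zero] using this

namespace Complex

theorem norm_eq_one_of_add_inv_eq_ofReal {z : ℂ} (hz : z ≠ 0) {w : ℝ} (hw : |w| < 2)
    (h : z + z⁻¹ = w) : ‖z‖ = 1 := by
  have hq : z ^ 2 - w * z + 1 = 0 := by
    field_simp at h
    linear_combination h
  have hre := congrArg re hq
  have him := congrArg im hq
  simp only [sq, add_re, sub_re, mul_re, ofReal_re, ofReal_im, zero_mul, sub_zero, one_re,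
    zero_re, add_im, sub_im, mul_im, add_zero, one_im, zero_im] at hre him
  rw [norm_def, normSq_apply, Real.sqrt_eq_one]
  -- a real root is impossible, the discriminant `w² - 4` being negative
  obtain ⟨hw1, hw2⟩ := abs_lt.mp hw
  have hw_eq : 2 * z.re = w := by
    by_contra hne
    have him0 : z.im = 0 := by
      have : z.im * (2 * z.re - w) = 0 := by linear_combination him
      exact (mul_eq_zero.mp this).resolve_right (sub_ne_zero.mpr hne)
    rw [him0] at hre
    nlinarith [sq_nonneg (2 * z.re - w)]
  linear_combination z.re * hw_eq - hre

theorem add_inv_eq_ofReal_two_mul_re {z : ℂ} (hz : ‖z‖ = 1) :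
    z + z⁻¹ = ((2 * z.re : ℝ) : ℂ) := by
  rw [inv_def, normSq_eq_norm_sq, hz]
  simp [add_conj]

end Complex

theorem norm_eq_norm_coeff_zero_of_norm_roots_eq_one {K : Type*} [NormedField K]
    [IsAlgClosed K] {p : K[X]} (hp : p.Monic) (hnodup : p.roots.Nodup) {a : K} (ha : a ∈ p.roots)
    (h : ∀ z ∈ p.roots, z ≠ a → ‖z‖ = 1) : ‖a‖ = ‖p.coeff 0‖ := by
  classical
  have hrest : ‖(p.roots.erase a).prod‖ = 1 := by
    rw [← normHom_apply, map_multiset_prod]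
    refine Multiset.prod_eq_one fun r hr => ?_
    obtain ⟨z, hz, rfl⟩ := Multiset.mem_map.mp hr
    exact h z (Multiset.mem_of_mem_erase hz) ((hnodup.mem_erase_iff).mp hz).1
  rw [(IsAlgClosed.splits p).coeff_zero_eq_prod_roots_of_monic hp, ← Multiset.prod_erase ha,
    norm_mul, norm_pow, norm_neg, norm_one, one_pow, one_mul, norm_mul, hrest, mul_one]

theorem exists_intCast_eq_of_isIntegral_ratCast {K : Type*} [Field K] [CharZero K] {q : ℚ}
    (hq : IsIntegral ℤ (q : K)) : ∃ n : ℤ, (n : ℚ) = q :=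
  IsIntegrallyClosed.isIntegral_iff.mp
    ((isIntegral_algebraMap_iff (algebraMap ℚ K).injective).mp (by simpa using hq))

theorem eq_or_eq_inv_or_norm_eq_one_of_aeval_minpoly {y : ℝ} (hy0 : y ≠ 0)
    (hyq : IsIntegral ℚ y)
    (hconj : ∀ w : ℂ, aeval w (minpoly ℚ (y + y⁻¹)) = 0 → w ≠ ((y + y⁻¹ : ℝ) : ℂ) →
      w.im = 0 ∧ ‖w‖ < 2)
    {z : ℂ} (hz : aeval z (minpoly ℚ y) = 0) : z = y ∨ z = (y : ℂ)⁻¹ ∨ ‖z‖ = 1 := by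
  have hz0 : z ≠ 0 := ne_zero_of_aeval_minpoly_eq_zero hyq hy0 hz
  by_cases hwx : z + z⁻¹ = ((y + y⁻¹ : ℝ) : ℂ)
  · push_cast at hwx
    exact (eq_or_eq_inv_of_add_inv_eq_add_inv hz0 (by exact_mod_cast hy0) hwx).imp_right Or.inl
  · obtain ⟨him, hlt⟩ := hconj _ (aeval_add_inv_minpoly_add_inv hyq hz) hwx
    have hw_real : z + z⁻¹ = ((z + z⁻¹).re : ℂ) := Complex.ext rfl (by simpa using him)
    refine Or.inr (Or.inr (Complex.norm_eq_one_of_add_inv_eq_ofReal hz0 ?_ hw_real))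
    rwa [Complex.abs_re_eq_norm.mpr him]

theorem aeval_inv_minpoly_eq_zero {y : ℝ} (hy : 1 < y) (hyq : IsIntegral ℚ y)
    (hinv : IsIntegral ℤ y⁻¹)
    (hroots : ∀ z : ℂ, aeval z (minpoly ℚ y) = 0 → z = y ∨ z = (y : ℂ)⁻¹ ∨ ‖z‖ = 1) :
    aeval (y : ℂ)⁻¹ (minpoly ℚ y) = 0 := by
  by_contra hne
  have hnorm : ‖(y : ℂ)‖ = ‖((minpoly ℚ y).map (algebraMap ℚ ℂ)).coeff 0‖ := by
    refine norm_eq_norm_coeff_zero_of_norm_roots_eq_one ((minpoly.monic hyq).map _)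
      (nodup_roots (minpoly.irreducible hyq).separable.map) ?_ fun z hz hzy => ?_
    · rw [mem_aroots, ← Complex.coe_algebraMap, aeval_algebraMap_apply, minpoly.aeval, map_zero]
      exact ⟨minpoly.ne_zero hyq, rfl⟩
    · obtain ⟨-, hz⟩ := mem_aroots.mp hz
      exact (((hroots z hz).resolve_left hzy).resolve_left fun h => hne (h ▸ hz))
  set c := (minpoly ℚ y).coeff 0
  have hyc : y⁻¹ = ((|c|⁻¹ : ℚ) : ℝ) := by
    rw [coeff_map, Complex.norm_real, Real.norm_of_nonneg (by positivity), eq_ratCast,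
      Complex.norm_ratCast] at hnorm
    rw [hnorm, Rat.cast_inv, Rat.cast_abs]
  obtain ⟨n, hn⟩ := exists_intCast_eq_of_isIntegral_ratCast (K := ℝ) (hyc ▸ hinv)
  have h0 : (0 : ℝ) < n := by rw [← Rat.cast_intCast, hn, ← hyc]; positivity
  have h1 : (n : ℝ) < 1 := by
    rw [← Rat.cast_intCast, hn, ← hyc]; exact inv_lt_one_of_one_lt₀ hy
  have : (0 : ℤ) < n ∧ n < 1 := ⟨by exact_mod_cast h0, by exact_mod_cast h1⟩
  omega

theorem im_eq_zero_and_norm_lt_two_of_aeval_minpoly_add_inv {y : ℝ} (hyq : IsIntegral ℚ y)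
    (hx : 2 < y + y⁻¹)
    (hcirc : ∀ z : ℂ, aeval z (minpoly ℚ y) = 0 → z ≠ y → z ≠ (y : ℂ)⁻¹ → ‖z‖ = 1)
    {w : ℂ} (hw : aeval w (minpoly ℚ (y + y⁻¹)) = 0) (hwx : w ≠ ((y + y⁻¹ : ℝ) : ℂ)) :
    w.im = 0 ∧ ‖w‖ < 2 := by
  obtain ⟨z, hz, rfl⟩ := exists_aeval_minpoly_eq_zero_add_inv_eq hyq hw
  push_cast at hwx
  have hz1 : ‖z‖ = 1 := hcirc z hz (by rintro rfl; exact hwx rfl)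
    (by rintro rfl; exact hwx (by rw [inv_inv, add_comm]))
  rw [Complex.add_inv_eq_ofReal_two_mul_re hz1] at hw ⊢
  have hrat : ∀ r : ℚ, 2 * z.re = r → (r : ℝ) = y + y⁻¹ := fun r hr =>
    (eq_algebraMap_of_aeval_algebraMap_minpoly (hyq.add hyq.inv)
      (by rw [eq_ratCast (algebraMap ℚ ℂ)]; simpa [hr] using hw)).symm
  refine ⟨Complex.ofReal_im _, ?_⟩
  rw [Complex.norm_real, Real.norm_eq_abs]
  have hle : |2 * z.re| ≤ 2 := by
    rw [abs_mul, abs_two]; linarith [hz1 ▸ Complex.abs_re_le_norm z]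
  refine hle.lt_of_ne fun habs => ?_
  rcases abs_eq (zero_le_two : (0 : ℝ) ≤ 2) |>.mp habs with h | h
  · linarith [hrat 2 (by simp [h])]
  · linarith [hrat (-2) (by simp [h])]

theorem geometricSalem_iff_salem (x y : ℝ) (hx : 2 < x) (hy : 1 < y)
    (hxy : y + 1 / y = x) : IsGeometricSalem x ↔ IsSalem y := by
  rw [one_div] at hxy
  subst hxy
  have hy0 : y ≠ 0 := by positivity
  constructor
  · rintro ⟨hxi, -, hconj⟩
    have hyi : IsIntegral ℤ y := .of_mul_eq_one_of_add (mul_inv_cancel₀ hy0) hxi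
    have hroots := fun z (hz : aeval z (minpoly ℚ y) = 0) =>
      eq_or_eq_inv_or_norm_eq_one_of_aeval_minpoly hy0 hyi.tower_top hconj hz
    refine ⟨hyi, hy, fun z hz hzy => ?_,
      aeval_inv_minpoly_eq_zero hy hyi.tower_top (by simpa using hxi.sub hyi) hroots,
      fun z hz hzy hzinv => ((hroots z hz).resolve_left hzy).resolve_left hzinv⟩
    rcases hroots z hz with rfl | rfl | h
    · exact absurd rfl hzy
    · rw [norm_inv, Complex.norm_real, Real.norm_of_nonneg (by positivity)]
      exact (inv_lt_one_of_one_lt₀ hy).le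
    · exact h.le
  · rintro ⟨hyi, -, -, hinv, hcirc⟩
    have hyinv : IsIntegral ℤ y⁻¹ := by
      have := isIntegral_of_aeval_minpoly_eq_zero (K := ℚ) hyi hinv
      rwa [← Complex.ofReal_inv, ← Complex.coe_algebraMap,
        isIntegral_algebraMap_iff (algebraMap ℝ ℂ).injective] at this
    exact ⟨hyi.add hyinv, hx, fun w hw hwx =>
      im_eq_zero_and_norm_lt_two_of_aeval_minpoly_add_inv hyi.tower_top hx hcirc hw hwx⟩
end

section
/- If y > 1 is a real algebraic number all of whose Galois conjugates other than y have absolute value at most 1, then x = y + 1/y satisfies x > 2 and every Galois conjugate of x is of the form z + 1/z for some conjugate z of y. -/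
/-! Every element of `ℚ⟮y⟯`, in particular `x = y + y⁻¹`, is sent to any chosen conjugate `w`
by some `ℚ`-embedding `φ : ℚ⟮y⟯ → ℂ`; then `z = φ y` is a conjugate of `y` and
`w = φ (y + y⁻¹) = z + z⁻¹`. -/

open Polynomial IntermediateField

theorem two_lt_add_inv_of_pos_of_ne_one {K : Type*} [Field K] [LinearOrder K]
    [IsStrictOrderedRing K] {y : K} (hy : 0 < y) (hy1 : y ≠ 1) : 2 < y + y⁻¹ :=
  calc (2 : K) < 2 + (y - 1) ^ 2 / y :=
        lt_add_of_pos_right 2 (div_pos (pow_two_pos_of_ne_zero (sub_ne_zero.mpr hy1)) hy)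
    _ = y + y⁻¹ := by field_simp; ring

theorem exists_aeval_minpoly_eq_zero_and_eq_add_inv {F E Ω : Type*} [Field F] [Field E]
    [Field Ω] [Algebra F E] [Algebra F Ω] [IsAlgClosed Ω] {y : E} (hy : IsIntegral F y) {w : Ω}
    (hw : aeval w (minpoly F (y + y⁻¹)) = 0) :
    ∃ z : Ω, aeval z (minpoly F y) = 0 ∧ w = z + z⁻¹ := by
  have hmem : y + y⁻¹ ∈ F⟮y⟯ :=
    add_mem (mem_adjoin_simple_self F y) (inv_mem (mem_adjoin_simple_self F y))
  obtain ⟨φ, hφ⟩ := exists_algHom_adjoin_of_splits_of_aeval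
    (by rintro s rfl; exact ⟨hy, IsAlgClosed.splits _⟩) hmem hw
  refine ⟨φ (AdjoinSimple.gen F y), by rw [aeval_algHom_apply, aeval_gen_minpoly, map_zero], ?_⟩
  rw [← hφ, ← map_inv₀, ← map_add]
  rfl

theorem conjugates_of_trace_general (y : ℝ) (hy : 1 < y) (halg : IsAlgebraic ℚ y) :
    2 < y + 1 / y ∧
      ∀ w : ℂ, aeval w (minpoly ℚ (y + 1 / y)) = 0 →
        ∃ z : ℂ, aeval z (minpoly ℚ y) = 0 ∧ w = z + 1 / z := by
  simp only [one_div]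
  exact ⟨two_lt_add_inv_of_pos_of_ne_one (by linarith) hy.ne',
    fun _ hw => exists_aeval_minpoly_eq_zero_and_eq_add_inv halg.isIntegral hw⟩

theorem conjugates_of_trace (y : ℝ) (hy : 1 < y) (halg : IsAlgebraic ℚ y)
    (hconj : ∀ z : ℂ, aeval z (minpoly ℚ y) = 0 → z ≠ (y : ℂ) → ‖z‖ ≤ 1) :
    2 < y + 1 / y ∧
      ∀ w : ℂ, aeval w (minpoly ℚ (y + 1 / y)) = 0 →
        ∃ z : ℂ, aeval z (minpoly ℚ y) = 0 ∧ w = z + 1 / z :=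
  conjugates_of_trace_general y hy halg
end

section
/- Suppose f: F(a,b) → ℝ and g: F(a,b) → ℝ are functions on the free group on two generators satisfying f(w₁)f(w₂) = f(w₁w₂) + f(w₁w₂⁻¹) and g(w₁)g(w₂) = g(w₁w₂) + g(w₁w₂⁻¹) for all words w₁, w₂, together with f(w) = f(w⁻¹) and g(w) = g(w⁻¹), f(1) = g(1) = 2. If f(a) = g(a), f(b) = g(b), and f(ab) = g(ab), then f(a^2 b) = g(a^2 b) and f([a,b]) = g([a,b]). -/
lemma trace_like_key {G : Type*} [Group G] (f : G → ℝ)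
    (hf : ∀ w₁ w₂ : G, f w₁ * f w₂ = f (w₁ * w₂) + f (w₁ * w₂⁻¹))
    (hfinv : ∀ w : G, f w = f w⁻¹) (hf1 : f 1 = 2) (a b : G) :
    f (a ^ 2 * b) = f a * f (a * b) - f b ∧
      f (a * b * a⁻¹ * b⁻¹) =
        f (a * b) ^ 2 - f a * f b * f (a * b) + f a ^ 2 + f b ^ 2 - 2 := by
  have cyc : ∀ x y : G, f (x * y) = f (y * x) := by
    intro x y
    have h1 := hf x y
    have h2 := hf y x
    have h3 : f (x * y⁻¹) = f (y * x⁻¹) := by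
      rw [hfinv (y * x⁻¹), mul_inv_rev, inv_inv]
    linarith
  have ha2b : f (a ^ 2 * b) = f a * f (a * b) - f b := by
    have h := hf a (a * b)
    have e1 : a * (a * b) = a ^ 2 * b := by rw [pow_two, mul_assoc]
    have e2 : f (a * (a * b)⁻¹) = f b := by
      rw [mul_inv_rev, cyc, hfinv]
      congr 1; group
    rw [e1, e2] at h; linarith
  refine ⟨ha2b, ?_⟩
  -- f(ab²) = f(ab) f(b) - f(a)
  have hab2 : f (a * b * b) = f (a * b) * f b - f a := by
    have h := hf (a * b) b
    have e2 : f (a * b * b⁻¹) = f a := by congr 1; group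
    rw [e2] at h; linarith
  -- f(b²) = f(b)² - 2
  have hb2 : f (b * b) = f b ^ 2 - 2 := by
    have h := hf b b
    have e2 : f (b * b⁻¹) = 2 := by rw [mul_inv_cancel, hf1]
    rw [e2] at h; nlinarith
  -- f(a²b²) = f(a) f(ab²) - f(b²)
  have ha2b2 : f (a * (a * b * b)) = f a * f (a * b * b) - f (b * b) := by
    have h := hf a (a * b * b)
    have e2 : f (a * (a * b * b)⁻¹) = f (b * b) := by
      rw [cyc, hfinv]; congr 1; group; rw [zpow_two]
    rw [e2] at h; linarith
  -- f([a,b]) = f(ab)² - f(a²b²)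
  have h := hf (a * b) (b * a)
  have e1 : f (a * b * (b * a)) = f (a * (a * b * b)) := by
    rw [show a * b * (b * a) = (a * b * b) * a by group, cyc]
  have e2 : f (a * b * (b * a)⁻¹) = f (a * b * a⁻¹ * b⁻¹) := by congr 1; group
  have e3 : f (b * a) = f (a * b) := cyc b a
  rw [e1, e2, e3, ha2b2, hab2, hb2] at h
  linear_combination -h

theorem trace_like_functions_agree (f g : FreeGroup (Fin 2) → ℝ)
    (hf : ∀ w₁ w₂ : FreeGroup (Fin 2), f w₁ * f w₂ = f (w₁ * w₂) + f (w₁ * w₂⁻¹))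
    (hg : ∀ w₁ w₂ : FreeGroup (Fin 2), g w₁ * g w₂ = g (w₁ * w₂) + g (w₁ * w₂⁻¹))
    (hfinv : ∀ w : FreeGroup (Fin 2), f w = f w⁻¹)
    (hginv : ∀ w : FreeGroup (Fin 2), g w = g w⁻¹)
    (hf1 : f 1 = 2) (hg1 : g 1 = 2)
    (ha : f (FreeGroup.of 0) = g (FreeGroup.of 0))
    (hb : f (FreeGroup.of 1) = g (FreeGroup.of 1))
    (hab : f (FreeGroup.of 0 * FreeGroup.of 1) = g (FreeGroup.of 0 * FreeGroup.of 1)) :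
    f (FreeGroup.of 0 ^ 2 * FreeGroup.of 1) = g (FreeGroup.of 0 ^ 2 * FreeGroup.of 1) ∧
      f (FreeGroup.of 0 * FreeGroup.of 1 * (FreeGroup.of 0)⁻¹ * (FreeGroup.of 1)⁻¹) =
        g (FreeGroup.of 0 * FreeGroup.of 1 * (FreeGroup.of 0)⁻¹ * (FreeGroup.of 1)⁻¹) := by
  obtain ⟨hf2, hf3⟩ := trace_like_key f hf hfinv hf1 (FreeGroup.of 0) (FreeGroup.of 1)
  obtain ⟨hg2, hg3⟩ := trace_like_key g hg hginv hg1 (FreeGroup.of 0) (FreeGroup.of 1)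
  rw [hf2, hg2, hf3, hg3, ha, hb, hab]
  exact ⟨rfl, rfl⟩
end

section
/- The system of equations x = y, x² - 2 = z x - y, x² + y² + z² = x y z with x > 2, y > 2, z > 2 has exactly one real solution (x, y, z). -/
/-!
With `y = x`, the linear equation forces `z = x + 1 - 2 / x` (which exceeds `2` once `x > 2`), and
substituting this into the Fricke relation and clearing the factor `x²` leaves the quintic
`x⁵ - 2x⁴ - 4x³ + 3x² + 4x - 4 = 0`. Writing `x = 2 + t`, the quintic equals `t²` times
`t³ + 8t² + 20t + 11 - 16/t - 16/t²`, which is strictly increasing for `t > 0`; hence the quintic has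
at most one root above `2`, and it has one in `(2, 3]` by the intermediate value theorem.
-/

open Set

def frickeQuintic (x : ℝ) : ℝ := x ^ 5 - 2 * x ^ 4 - 4 * x ^ 3 + 3 * x ^ 2 + 4 * x - 4

noncomputable def frickeQuinticRatio (t : ℝ) : ℝ := frickeQuintic (2 + t) / t ^ 2

lemma frickeQuinticRatio_eq {t : ℝ} (ht : t ≠ 0) :
    frickeQuinticRatio t = t ^ 3 + 8 * t ^ 2 + 20 * t + 11 - 16 / t - 16 / t ^ 2 := by
  unfold frickeQuinticRatio frickeQuintic
  field_simp
  ring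

lemma strictMonoOn_frickeQuinticRatio : StrictMonoOn frickeQuinticRatio (Ioi 0) := by
  intro s (hs : 0 < s) t (ht : 0 < t) hst
  rw [frickeQuinticRatio_eq hs.ne', frickeQuinticRatio_eq ht.ne']
  gcongr

lemma existsUnique_frickeQuintic_eq_zero : ∃! x : ℝ, 2 < x ∧ frickeQuintic x = 0 := by
  have hroot_iff {x : ℝ} (hx : 2 < x) : frickeQuintic x = 0 ↔ frickeQuinticRatio (x - 2) = 0 := by
    rw [frickeQuinticRatio, add_sub_cancel, div_eq_zero_iff]
    simp [(sub_pos.2 hx).ne']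
  obtain ⟨x, hx, hq⟩ : ∃ x ∈ Icc (2 : ℝ) 3, frickeQuintic x = 0 :=
    intermediate_value_Icc (by norm_num) (by unfold frickeQuintic; fun_prop)
      ⟨by norm_num [frickeQuintic], by norm_num [frickeQuintic]⟩
  have hx2 : 2 < x := hx.1.lt_of_ne (by rintro rfl; norm_num [frickeQuintic] at hq)
  refine ⟨x, ⟨hx2, hq⟩, fun x' ⟨hx', hq'⟩ => ?_⟩
  have := strictMonoOn_frickeQuinticRatio.injOn (sub_pos.2 hx') (sub_pos.2 hx2)
    (((hroot_iff hx').1 hq').trans ((hroot_iff hx2).1 hq).symm)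
  linarith

lemma two_lt_add_one_sub_two_div {x : ℝ} (hx : 2 < x) : 2 < x + 1 - 2 / x := by
  have : 2 / x < 1 := (div_lt_one (by linarith)).2 hx
  linarith

lemma frickeRelation_iff {x z : ℝ} (hx : x ≠ 0) (hzx : z * x = x ^ 2 + x - 2) :
    x ^ 2 + x ^ 2 + z ^ 2 = x * x * z ↔ frickeQuintic x = 0 := by
  have key : x ^ 2 * (x * x * z - (x ^ 2 + x ^ 2 + z ^ 2)) = frickeQuintic x := by
    unfold frickeQuintic
    linear_combination (x ^ 3 - x ^ 2 - x + 2 - z * x) * hzx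
  rw [← key, mul_eq_zero, sub_eq_zero, eq_comm]
  simp [hx]

lemma fricke_system_iff {x y z : ℝ} (hx : x ≠ 0) :
    (x = y ∧ x ^ 2 - 2 = z * x - y ∧ x ^ 2 + y ^ 2 + z ^ 2 = x * y * z) ↔
      (x = y ∧ z = x + 1 - 2 / x ∧ frickeQuintic x = 0) := by
  have hz_iff : x ^ 2 - 2 = z * x - x ↔ z = x + 1 - 2 / x := by
    constructor <;> intro h
    · field_simp
      linarith
    · rw [h]
      field_simp
      ring
  constructor
  · rintro ⟨rfl, hlin, hfricke⟩
    exact ⟨rfl, hz_iff.1 hlin, (frickeRelation_iff hx (by linarith)).1 hfricke⟩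
  · rintro ⟨rfl, hz, hq⟩
    have hlin := hz_iff.2 hz
    exact ⟨rfl, hlin, (frickeRelation_iff hx (by linarith)).2 hq⟩

theorem fricke_system_unique_solution :
    ∃! p : ℝ × ℝ × ℝ,
      p.1 = p.2.1 ∧
      p.1 ^ 2 - 2 = p.2.2 * p.1 - p.2.1 ∧
      p.1 ^ 2 + p.2.1 ^ 2 + p.2.2 ^ 2 = p.1 * p.2.1 * p.2.2 ∧
      2 < p.1 ∧ 2 < p.2.1 ∧ 2 < p.2.2 := by
  obtain ⟨x, ⟨hx, hq⟩, hunique⟩ := existsUnique_frickeQuintic_eq_zero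
  refine ⟨(x, x, x + 1 - 2 / x), ?_, ?_⟩
  · obtain ⟨h₁, h₂, h₃⟩ := (fricke_system_iff (by positivity)).2 ⟨rfl, rfl, hq⟩
    exact ⟨h₁, h₂, h₃, hx, hx, two_lt_add_one_sub_two_div hx⟩
  · rintro ⟨x', y, z⟩ ⟨h₁, h₂, h₃, hx', -, -⟩
    obtain ⟨rfl, rfl, hq'⟩ := (fricke_system_iff (x := x') (y := y) (z := z) (by positivity)).1
      ⟨h₁, h₂, h₃⟩
    rw [hunique x' ⟨hx', hq'⟩]
end
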